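/- Let λ ∈ ℂ and suppose y(x) = Σ_{n≥0} aₙxⁿ is a power series with positive radius of convergence that solves the Heun-type equation y″(x) + [(3(λ+5)x² − (8λ+43)x + 28)/(x(1−x)(8−3x))]y′(x) + [((λ−1)(3(λ+9)x − 5λ−51))/(4x(1−x)(8−3x))]y(x) = 0 on an interval (0,ε) with ε > 0. Then a₁ = ((λ−1)(5λ+51)/112)·a₀ and for every integer n ≥ 0: a_{n+2} = Aₙ(λ)a_{n+1} + Bₙ(λ)aₙ, where Aₙ(λ) = (44n² + 8n(4λ+27) + λ(5λ+78) + 121)/(16(n+2)(2n+9)) and Bₙ(λ) = −3(λ+2n−1)(λ+2n+9)/(16(n+2)(2n+9)). -/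

import Mathlib

/-- The Heun-type equation for `y` at the point `x`. -/
noncomputable def HeunEq (lam : ℂ) (y : ℝ → ℂ) (x : ℝ) : Prop :=
  deriv (deriv y) x
    + (3 * (lam + 5) * (x : ℂ) ^ 2 - (8 * lam + 43) * (x : ℂ) + 28)
        / ((x : ℂ) * (1 - (x : ℂ)) * (8 - 3 * (x : ℂ))) * deriv y x
    + (lam - 1) * (3 * (lam + 9) * (x : ℂ) - 5 * lam - 51)
        / (4 * (x : ℂ) * (1 - (x : ℂ)) * (8 - 3 * (x : ℂ))) * y x = 0

/-- The coefficient `Aₙ(λ)` of the recurrence relation. -/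
noncomputable def An (n : ℕ) (lam : ℂ) : ℂ :=
  (44 * (n : ℂ) ^ 2 + 8 * (n : ℂ) * (4 * lam + 27) + lam * (5 * lam + 78) + 121)
    / (16 * ((n : ℂ) + 2) * (2 * (n : ℂ) + 9))

/-- The coefficient `Bₙ(λ)` of the recurrence relation. -/
noncomputable def Bn (n : ℕ) (lam : ℂ) : ℂ :=
  -3 * (lam + 2 * (n : ℂ) - 1) * (lam + 2 * (n : ℂ) + 9)
    / (16 * ((n : ℂ) + 2) * (2 * (n : ℂ) + 9))

/-- The sum of the power series with coefficients `a` evaluated at the real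
point `x`. -/
noncomputable def powSeries (a : ℕ → ℂ) (x : ℝ) : ℂ := ∑' n, a n * (x : ℂ) ^ n

open Filter Topology

namespace HeunAux

/-- Abstract summability hypothesis: radius of convergence at least `r`. -/
def Hyp (r : ℝ) (a : ℕ → ℂ) : Prop :=
  ∀ x : ℝ, |x| < r → Summable fun n => ‖a n‖ * |x| ^ n

/-- derivative coefficients -/
noncomputable def dcoef (a : ℕ → ℂ) : ℕ → ℂ := fun n => ((n : ℂ) + 1) * a (n + 1)

/-- shift coefficients up by `k` (multiply series by `x^k`). -/
def shiftc (k : ℕ) (a : ℕ → ℂ) : ℕ → ℂ := fun n => if k ≤ n then a (n - k) else 0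

lemma Hyp.summable {r : ℝ} {a : ℕ → ℂ} (h : Hyp r a) {x : ℝ} (hx : |x| < r) :
    Summable fun n => a n * (x : ℂ) ^ n := by
  refine Summable.of_norm ?_
  have := h x hx
  simpa [norm_mul, norm_pow, Complex.norm_real, Real.norm_eq_abs] using this

lemma Hyp.exists_bound {r : ℝ} {a : ℕ → ℂ} (h : Hyp r a) {σ : ℝ} (hσ0 : 0 ≤ σ)
    (hσ : σ < r) : ∃ C : ℝ, 0 ≤ C ∧ ∀ n, ‖a n‖ * σ ^ n ≤ C := by
  have hs : Summable fun n => ‖a n‖ * σ ^ n := by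
    have := h σ (by rwa [abs_of_nonneg hσ0])
    simpa [abs_of_nonneg hσ0] using this
  have ht := hs.tendsto_atTop_zero
  obtain ⟨C, hC⟩ := ht.bddAbove_range
  refine ⟨max C 0, le_max_right _ _, fun n => ?_⟩
  exact le_trans (hC (Set.mem_range_self n)) (le_max_left _ _)

lemma Hyp.add {r : ℝ} {a b : ℕ → ℂ} (ha : Hyp r a) (hb : Hyp r b) :
    Hyp r (fun n => a n + b n) := by
  intro x hx
  refine Summable.of_nonneg_of_le (fun n => by positivity)
    (fun n => ?_) ((ha x hx).add (hb x hx))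
  have : ‖a n + b n‖ ≤ ‖a n‖ + ‖b n‖ := norm_add_le _ _
  have hxn : (0:ℝ) ≤ |x| ^ n := by positivity
  nlinarith [norm_nonneg (a n), norm_nonneg (b n)]

lemma Hyp.smul {r : ℝ} {a : ℕ → ℂ} (ha : Hyp r a) (k : ℂ) :
    Hyp r (fun n => k * a n) := by
  intro x hx
  have := (ha x hx).mul_left ‖k‖
  refine this.congr fun n => ?_
  simp [norm_mul, mul_assoc]

lemma Hyp.shiftc {r : ℝ} {a : ℕ → ℂ} (ha : Hyp r a) (k : ℕ) :
    Hyp r (shiftc k a) := by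
  intro x hx
  rw [← summable_nat_add_iff k]
  have := (ha x hx).mul_left (|x| ^ k)
  refine this.congr fun n => ?_
  simp only [HeunAux.shiftc, le_add_iff_nonneg_left, zero_le, if_true,
    Nat.add_sub_cancel]
  rw [pow_add]
  ring

lemma Hyp.dcoef {r : ℝ} {a : ℕ → ℂ} (ha : Hyp r a) : Hyp r (dcoef a) := by
  intro x hx
  have hx0 : (0:ℝ) ≤ |x| := abs_nonneg x
  set σ : ℝ := (|x| + r) / 2 with hσdef
  have hxσ : |x| < σ := by simp only [hσdef]; linarith
  have hσr : σ < r := by simp only [hσdef]; linarith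
  have hσ0 : 0 < σ := lt_of_le_of_lt hx0 hxσ
  obtain ⟨C, hC0, hC⟩ := ha.exists_bound hσ0.le hσr
  set q : ℝ := |x| / σ with hqdef
  have hq0 : 0 ≤ q := by positivity
  have hq1 : q < 1 := by
    rw [hqdef, div_lt_one hσ0]; exact hxσ
  have hmaj : Summable fun n : ℕ => C / σ * (((n : ℝ) + 1) * q ^ n) := by
    refine Summable.mul_left _ ?_
    have h1 : Summable fun n : ℕ => (n : ℝ) ^ 1 * q ^ n :=
      summable_pow_mul_geometric_of_norm_lt_one 1 (by
        rwa [Real.norm_eq_abs, abs_of_nonneg hq0])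
    have h2 : Summable fun n : ℕ => q ^ n := summable_geometric_of_lt_one hq0 hq1
    refine (h1.add h2).congr fun n => ?_
    ring
  refine Summable.of_nonneg_of_le (fun n => by positivity) (fun n => ?_) hmaj
  have hb : ‖a (n + 1)‖ ≤ C / σ ^ (n + 1) := by
    rw [le_div_iff₀ (by positivity)]
    exact hC (n + 1)
  have hnorm : ‖HeunAux.dcoef a n‖ = ((n : ℝ) + 1) * ‖a (n + 1)‖ := by
    simp only [HeunAux.dcoef, norm_mul]
    congr 1
    have : ((n : ℂ) + 1) = ((n + 1 : ℕ) : ℂ) := by push_cast; ring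
    rw [this, Complex.norm_natCast]
    push_cast; ring
  rw [hnorm]
  have key : C / σ * (((n : ℝ) + 1) * q ^ n) = ((n : ℝ) + 1) * (C / σ ^ (n + 1)) * |x| ^ n := by
    rw [hqdef, div_pow]
    field_simp
    ring
  rw [key]
  calc ((n : ℝ) + 1) * ‖a (n + 1)‖ * |x| ^ n
      ≤ ((n : ℝ) + 1) * (C / σ ^ (n + 1)) * |x| ^ n := by
        have := mul_le_mul_of_nonneg_left hb (by positivity : (0:ℝ) ≤ (n:ℝ) + 1)
        exact mul_le_mul_of_nonneg_right this (by positivity)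
    _ = _ := rfl

lemma hasDerivAt_powSeries {r : ℝ} {a : ℕ → ℂ} (h : Hyp r a) {x : ℝ} (hx : |x| < r) :
    HasDerivAt (powSeries a) (powSeries (dcoef a) x) x := by
  have hx0 : (0:ℝ) ≤ |x| := abs_nonneg x
  set ρ : ℝ := (3 * |x| + r) / 4 with hρdef
  set σ : ℝ := (|x| + r) / 2 with hσdef
  have hxρ : |x| < ρ := by simp only [hρdef]; linarith
  have hρσ : ρ < σ := by simp only [hρdef, hσdef]; linarith
  have hσr : σ < r := by simp only [hσdef]; linarith
  have hρ0 : 0 < ρ := lt_of_le_of_lt hx0 hxρ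
  have hσ0 : 0 < σ := hρ0.trans hρσ
  obtain ⟨C, hC0, hC⟩ := h.exists_bound hσ0.le hσr
  set q : ℝ := ρ / σ with hqdef
  have hq0 : 0 ≤ q := by positivity
  have hq1 : q < 1 := by rw [hqdef, div_lt_one hσ0]; exact hρσ
  set u : ℕ → ℝ := fun n => C / ρ * ((n : ℝ) * q ^ n) with hudef
  have hu : Summable u := by
    refine Summable.mul_left _ ?_
    have := summable_pow_mul_geometric_of_norm_lt_one (R := ℝ) 1 (by
      rwa [Real.norm_eq_abs, abs_of_nonneg hq0])
    refine this.congr fun n => by ring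
  have hxt : x ∈ Set.Ioo (-ρ) ρ := by
    constructor <;> [nlinarith [neg_abs_le x]; nlinarith [le_abs_self x]]
  have key : HasDerivAt (fun z : ℝ => ∑' n, a n * (z : ℂ) ^ n)
      (∑' n, a n * ((n : ℂ) * (x : ℂ) ^ (n - 1))) x := by
    refine hasDerivAt_tsum_of_isPreconnected (t := Set.Ioo (-ρ) ρ)
      (y₀ := x) (y := x)
      (g := fun n (z : ℝ) => a n * (z : ℂ) ^ n)
      (g' := fun n (z : ℝ) => a n * ((n : ℂ) * (z : ℂ) ^ (n - 1)))
      hu isOpen_Ioo isPreconnected_Ioo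
      (fun n y _ => ?_) (fun n y hy => ?_) hxt (h.summable hx) hxt
    · exact ((hasDerivAt_pow n ((y : ℂ))).comp_ofReal).const_mul (a n)
    · have hyρ : |y| < ρ := by
        rw [abs_lt]; exact ⟨hy.1, hy.2⟩
      have hnorm : ‖a n * ((n : ℂ) * (y : ℂ) ^ (n - 1))‖
          = ‖a n‖ * ((n : ℝ) * |y| ^ (n - 1)) := by
        simp [norm_mul, norm_pow, Complex.norm_real, Real.norm_eq_abs]
      rw [hnorm]
      rcases n with _ | m
      · simp [hudef]
      · have hy0 : (0:ℝ) ≤ |y| := abs_nonneg y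
        have hb : ‖a (m + 1)‖ ≤ C / σ ^ (m + 1) := by
          rw [le_div_iff₀ (by positivity)]; exact hC (m + 1)
        have hyρ' : |y| ^ m ≤ ρ ^ m := pow_le_pow_left₀ hy0 hyρ.le m
        have heq : u (m + 1) = ((m:ℝ) + 1) * (C / σ ^ (m + 1)) * ρ ^ m := by
          simp only [hudef, hqdef, div_pow]
          push_cast
          field_simp
          ring
        rw [heq]
        simp only [Nat.add_sub_cancel, Nat.cast_add, Nat.cast_one]
        calc ‖a (m + 1)‖ * (((m:ℝ) + 1) * |y| ^ m)
            ≤ (C / σ ^ (m + 1)) * (((m:ℝ) + 1) * ρ ^ m) := by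
              refine mul_le_mul hb ?_ (by positivity) (by positivity)
              exact mul_le_mul_of_nonneg_left hyρ' (by positivity)
          _ = _ := by ring
  have hsum' : Summable fun n => a n * ((n : ℂ) * (x : ℂ) ^ (n - 1)) := by
    refine Summable.of_norm ?_
    refine Summable.of_nonneg_of_le (fun n => norm_nonneg _) (fun n => ?_) hu
    have hnorm : ‖a n * ((n : ℂ) * (x : ℂ) ^ (n - 1))‖
        = ‖a n‖ * ((n : ℝ) * |x| ^ (n - 1)) := by
      simp [norm_mul, norm_pow, Complex.norm_real, Real.norm_eq_abs]
    rw [hnorm]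
    rcases n with _ | m
    · simp [hudef]
    · have hb : ‖a (m + 1)‖ ≤ C / σ ^ (m + 1) := by
        rw [le_div_iff₀ (by positivity)]; exact hC (m + 1)
      have hyρ' : |x| ^ m ≤ ρ ^ m := pow_le_pow_left₀ hx0 hxρ.le m
      have heq : u (m + 1) = ((m:ℝ) + 1) * (C / σ ^ (m + 1)) * ρ ^ m := by
        simp only [hudef, hqdef, div_pow]
        push_cast
        field_simp
        ring
      rw [heq]
      simp only [Nat.add_sub_cancel, Nat.cast_add, Nat.cast_one]
      calc ‖a (m + 1)‖ * (((m:ℝ) + 1) * |x| ^ m)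
          ≤ (C / σ ^ (m + 1)) * (((m:ℝ) + 1) * ρ ^ m) := by
            refine mul_le_mul hb ?_ (by positivity) (by positivity)
            exact mul_le_mul_of_nonneg_left hyρ' (by positivity)
        _ = _ := by ring
  have htsum : (∑' n, a n * ((n : ℂ) * (x : ℂ) ^ (n - 1)))
      = powSeries (dcoef a) x := by
    rw [Summable.tsum_eq_zero_add hsum']
    simp only [Nat.cast_zero, zero_mul, mul_zero, zero_add]
    refine tsum_congr fun n => ?_
    simp only [dcoef, Nat.add_sub_cancel]
    push_cast
    ring
  rw [htsum] at key
  exact key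

lemma hasSum_shiftc {e : ℕ → ℂ} {X S : ℂ} (h : HasSum (fun n => e n * X ^ n) S) (k : ℕ) :
    HasSum (fun n => shiftc k e n * X ^ n) (X ^ k * S) := by
  have h2 := h.mul_left (X ^ k)
  have hinj : Function.Injective (fun n : ℕ => n + k) := fun a b hab => by
    simp only at hab; omega
  refine (Function.Injective.hasSum_iff hinj ?_).1 ?_
  · intro m hm
    have hmk : m < k := by
      by_contra hcon
      exact hm ⟨m - k, by simp only; omega⟩
    simp [shiftc, Nat.not_le.2 hmk]
  · rw [show ((fun n => shiftc k e n * X ^ n) ∘ fun n : ℕ => n + k)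
        = fun n => X ^ k * (e n * X ^ n) from funext fun n => by
      simp only [Function.comp_apply, shiftc, le_add_iff_nonneg_left, zero_le, if_true,
        Nat.add_sub_cancel, pow_add]
      ring]
    exact h2

lemma eq_zero_of_vanishing {r : ℝ} (hr : 0 < r) {c : ℕ → ℂ} (h : Hyp r c)
    {δ : ℝ} (hδ : 0 < δ) (hv : ∀ x : ℝ, x ∈ Set.Ioo 0 δ → powSeries c x = 0) :
    ∀ n, c n = 0 := by
  set p := FormalMultilinearSeries.ofScalars ℂ c with hp
  have hsum2 : Summable fun n => ‖p n‖ * ((⟨r / 2, by positivity⟩ : NNReal) : ℝ) ^ n := by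
    have h2 : |r / 2| < r := by rw [abs_of_pos (by positivity)]; linarith
    refine (h _ h2).congr fun n => ?_
    rw [FormalMultilinearSeries.ofScalars_norm]
    norm_num [abs_of_pos (show (0:ℝ) < r / 2 by positivity)]
  have hrad : 0 < p.radius := by
    refine lt_of_lt_of_le ?_ (p.le_radius_of_summable_norm hsum2)
    exact ENNReal.coe_pos.2 (NNReal.coe_pos.1 (half_pos hr))
  have hball := p.hasFPowerSeriesOnBall hrad
  have hat : HasFPowerSeriesAt p.sum p 0 := hball.hasFPowerSeriesAt
  have hsumeq : ∀ x : ℝ, p.sum ((x : ℂ)) = powSeries c x := by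
    intro x
    simp only [FormalMultilinearSeries.sum, hp, FormalMultilinearSeries.ofScalars_apply_eq,
      powSeries, smul_eq_mul]
  have htend : Tendsto (fun k : ℕ => ((δ / (k + 2) : ℝ) : ℂ)) atTop (𝓝[≠] (0 : ℂ)) := by
    refine tendsto_nhdsWithin_of_tendsto_nhds_of_eventually_within _ ?_ ?_
    · have h1 : Tendsto (fun k : ℕ => δ / (k + 2) : ℕ → ℝ) atTop (𝓝 0) := by
        have := (tendsto_const_div_atTop_nhds_zero_nat δ).comp
          (tendsto_add_atTop_nat 2)
        refine this.congr fun k => ?_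
        simp only [Function.comp_apply]
        push_cast
        ring
      exact (Complex.continuous_ofReal.tendsto' 0 0 (by simp)).comp h1
    · refine Eventually.of_forall fun k => ?_
      simp only [Set.mem_compl_iff, Set.mem_singleton_iff]
      exact Complex.ofReal_ne_zero.mpr (by positivity)
  have hfreq : ∃ᶠ z in 𝓝[≠] (0 : ℂ), p.sum z = 0 := by
    refine htend.frequently (Eventually.of_forall fun k => ?_).frequently
    rw [hsumeq]
    refine hv _ ⟨by positivity, ?_⟩
    rw [div_lt_iff₀ (by positivity)]
    nlinarith [Nat.cast_nonneg (α := ℝ) k]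
  have hev : ∀ᶠ z in 𝓝 (0 : ℂ), p.sum z = 0 :=
    (hat.analyticAt.frequently_zero_iff_eventually_zero).1 hfreq
  have hp0 : p = 0 := hat.eq_zero_of_eventually hev
  intro n
  have h0 : FormalMultilinearSeries.ofScalars ℂ c = 0 := hp ▸ hp0
  exact (FormalMultilinearSeries.ofScalars_eq_zero ℂ n).1 (by rw [h0]; rfl)

noncomputable def heunCoef (lam : ℂ) (a : ℕ → ℂ) : ℕ → ℂ := fun n =>
  32 * shiftc 1 (dcoef (dcoef a)) n + (-44) * shiftc 2 (dcoef (dcoef a)) n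
  + 12 * shiftc 3 (dcoef (dcoef a)) n + (12 * (lam + 5)) * shiftc 2 (dcoef a) n
  + (-(4 * (8 * lam + 43))) * shiftc 1 (dcoef a) n + 112 * dcoef a n
  + (3 * (lam - 1) * (lam + 9)) * shiftc 1 a n + (-((lam - 1) * (5 * lam + 51))) * a n

lemma heunCoef_zero (lam : ℂ) (a : ℕ → ℂ) :
    heunCoef lam a 0 = 112 * a 1 - (lam - 1) * (5 * lam + 51) * a 0 := by
  simp [heunCoef, shiftc, dcoef]; ring

lemma heunCoef_succ (lam : ℂ) (a : ℕ → ℂ) (n : ℕ) :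
    heunCoef lam a (n + 1) =
      32 * ((n : ℂ) + 1) * ((n : ℂ) + 2) * a (n + 2)
      - 44 * (n : ℂ) * ((n : ℂ) + 1) * a (n + 1)
      + 12 * ((n : ℂ) - 1) * (n : ℂ) * a n
      + 12 * (lam + 5) * (n : ℂ) * a n
      - 4 * (8 * lam + 43) * ((n : ℂ) + 1) * a (n + 1)
      + 112 * ((n : ℂ) + 2) * a (n + 2)
      + 3 * (lam - 1) * (lam + 9) * a n
      - (lam - 1) * (5 * lam + 51) * a (n + 1) := by
  rcases n with _ | _ | m
  · simp [heunCoef, shiftc, dcoef]; ring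
  · simp [heunCoef, shiftc, dcoef]; ring
  · have e1 : m + 2 + 1 - 1 = m + 2 := rfl
    have e2 : m + 2 + 1 - 2 = m + 1 := rfl
    have e3 : m + 2 + 1 - 3 = m := rfl
    simp only [heunCoef, shiftc, dcoef,
      if_pos (by omega : 1 ≤ m + 2 + 1), if_pos (by omega : 2 ≤ m + 2 + 1),
      if_pos (by omega : 3 ≤ m + 2 + 1), e1, e2, e3]
    push_cast
    ring

lemma hyp_heunCoef {r : ℝ} {a : ℕ → ℂ} (lam : ℂ) (ha : Hyp r a) :
    Hyp r (heunCoef lam a) := by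
  have hb : Hyp r (dcoef a) := ha.dcoef
  have hd : Hyp r (dcoef (dcoef a)) := hb.dcoef
  exact ((((((((hd.shiftc 1).smul 32).add ((hd.shiftc 2).smul (-44))).add
    ((hd.shiftc 3).smul 12)).add ((hb.shiftc 2).smul (12 * (lam + 5)))).add
    ((hb.shiftc 1).smul (-(4 * (8 * lam + 43))))).add (hb.smul 112)).add
    ((ha.shiftc 1).smul (3 * (lam - 1) * (lam + 9)))).add
    (ha.smul (-((lam - 1) * (5 * lam + 51))))

end HeunAux

/-- If a power series `y(x) = Σ aₙxⁿ` with positive radius of convergence solves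
the Heun-type equation on `(0,ε)`, then its coefficients satisfy
`a₁ = ((λ−1)(5λ+51)/112)a₀` and `a_{n+2} = Aₙ(λ)a_{n+1} + Bₙ(λ)aₙ`. -/
theorem stmt_13 (lam : ℂ) (a : ℕ → ℂ)
    (hconv : ∃ r : ℝ, 0 < r ∧ ∀ x : ℝ, |x| < r →
      Summable fun n => ‖a n‖ * |x| ^ n)
    (ε : ℝ) (hε : 0 < ε)
    (hsol : ∀ x ∈ Set.Ioo 0 ε, HeunEq lam (powSeries a) x) :
    a 1 = (lam - 1) * (5 * lam + 51) / 112 * a 0 ∧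
    ∀ n : ℕ, a (n + 2) = An n lam * a (n + 1) + Bn n lam * a n := by
  classical
  obtain ⟨r, hr, ha'⟩ := hconv
  have ha : HeunAux.Hyp r a := ha'
  have hb : HeunAux.Hyp r (HeunAux.dcoef a) := ha.dcoef
  have hd : HeunAux.Hyp r (HeunAux.dcoef (HeunAux.dcoef a)) := hb.dcoef
  set b := HeunAux.dcoef a with hbdef
  set d := HeunAux.dcoef b with hddef
  set δ : ℝ := min ε (min r 1) / 2 with hδdef
  have hδpos : 0 < δ := by
    have h1 : 0 < min ε (min r 1) := lt_min hε (lt_min hr one_pos)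
    positivity
  have hvan : ∀ x : ℝ, x ∈ Set.Ioo 0 δ → powSeries (HeunAux.heunCoef lam a) x = 0 := by
    intro x hx
    have hx0 : 0 < x := hx.1
    have hm1 : min ε (min r 1) ≤ ε := min_le_left _ _
    have hm2 : min ε (min r 1) ≤ r := le_trans (min_le_right _ _) (min_le_left _ _)
    have hm3 : min ε (min r 1) ≤ 1 := le_trans (min_le_right _ _) (min_le_right _ _)
    have hxδ : x < δ := hx.2
    have hxε : x < ε := by rw [hδdef] at hxδ; linarith
    have hxr : |x| < r := by rw [abs_of_pos hx0, hδdef] at *; linarith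
    have hx1 : x < 1 := by rw [hδdef] at hxδ; linarith
    -- derivatives
    have hd1 : HasDerivAt (powSeries a) (powSeries b x) x :=
      HeunAux.hasDerivAt_powSeries ha hxr
    have hev : deriv (powSeries a) =ᶠ[𝓝 x] powSeries b := by
      have hmem : Set.Ioo (-r) r ∈ 𝓝 x := by
        refine Ioo_mem_nhds ?_ ?_ <;> rw [abs_of_pos hx0] at hxr <;> linarith
      filter_upwards [hmem] with z hz
      exact (HeunAux.hasDerivAt_powSeries ha (abs_lt.2 ⟨hz.1, hz.2⟩)).deriv
    have hd2 : deriv (deriv (powSeries a)) x = powSeries d x := by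
      rw [Filter.EventuallyEq.deriv_eq hev]
      exact (HeunAux.hasDerivAt_powSeries hb hxr).deriv
    have heq := hsol x ⟨hx0, hxε⟩
    rw [HeunEq, hd2, hd1.deriv] at heq
    set X : ℂ := (x : ℂ) with hXdef
    set A := powSeries a x with hAdef
    set B := powSeries b x with hBdef
    set D := powSeries d x with hDdef
    have hXne : X ≠ 0 := Complex.ofReal_ne_zero.2 (ne_of_gt hx0)
    have h1ne : (1 : ℂ) - X ≠ 0 := by
      rw [hXdef, show (1:ℂ) - (x:ℂ) = ((1 - x : ℝ) : ℂ) by push_cast; ring]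
      exact Complex.ofReal_ne_zero.2 (by linarith)
    have h8ne : (8 : ℂ) - 3 * X ≠ 0 := by
      rw [hXdef, show (8:ℂ) - 3*(x:ℂ) = ((8 - 3*x : ℝ) : ℂ) by push_cast; ring]
      exact Complex.ofReal_ne_zero.2 (by nlinarith)
    have hprod : X * (1 - X) * (8 - 3 * X) ≠ 0 :=
      mul_ne_zero (mul_ne_zero hXne h1ne) h8ne
    have key : 32 * (X ^ 1 * D) + -44 * (X ^ 2 * D) + 12 * (X ^ 3 * D)
        + 12 * (lam + 5) * (X ^ 2 * B) + -(4 * (8 * lam + 43)) * (X ^ 1 * B)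
        + 112 * B + 3 * (lam - 1) * (lam + 9) * (X ^ 1 * A)
        + -((lam - 1) * (5 * lam + 51)) * A = 0 := by
      field_simp at heq
      have h' : X * (1 - X) * (8 - 3 * X) *
          (32 * (X ^ 1 * D) + -44 * (X ^ 2 * D) + 12 * (X ^ 3 * D)
          + 12 * (lam + 5) * (X ^ 2 * B) + -(4 * (8 * lam + 43)) * (X ^ 1 * B)
          + 112 * B + 3 * (lam - 1) * (lam + 9) * (X ^ 1 * A)
          + -((lam - 1) * (5 * lam + 51)) * A) = 0 := by
        linear_combination (X * (1 - X) * (8 - 3 * X)) * heq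
      rcases mul_eq_zero.1 h' with h'' | h''
      · exact absurd h'' hprod
      · exact h''
    have hHA : HasSum (fun n => a n * X ^ n) A := (ha.summable hxr).hasSum
    have hHB : HasSum (fun n => b n * X ^ n) B := (hb.summable hxr).hasSum
    have hHD : HasSum (fun n => d n * X ^ n) D := (hd.summable hxr).hasSum
    have H := (((((((HeunAux.hasSum_shiftc hHD 1).mul_left 32).add
        ((HeunAux.hasSum_shiftc hHD 2).mul_left (-44))).add
        ((HeunAux.hasSum_shiftc hHD 3).mul_left 12)).add
        ((HeunAux.hasSum_shiftc hHB 2).mul_left (12 * (lam + 5)))).add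
        ((HeunAux.hasSum_shiftc hHB 1).mul_left (-(4 * (8 * lam + 43))))).add
        (hHB.mul_left 112)).add
        ((HeunAux.hasSum_shiftc hHA 1).mul_left (3 * (lam - 1) * (lam + 9))) |>.add
        (hHA.mul_left (-((lam - 1) * (5 * lam + 51))))
    have hS : HasSum (fun n => HeunAux.heunCoef lam a n * X ^ n)
        (32 * (X ^ 1 * D) + -44 * (X ^ 2 * D) + 12 * (X ^ 3 * D)
          + 12 * (lam + 5) * (X ^ 2 * B) + -(4 * (8 * lam + 43)) * (X ^ 1 * B)
          + 112 * B + 3 * (lam - 1) * (lam + 9) * (X ^ 1 * A)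
          + -((lam - 1) * (5 * lam + 51)) * A) := by
      have hfun : ∀ n, HeunAux.heunCoef lam a n * X ^ n
          = 32 * (HeunAux.shiftc 1 d n * X ^ n)
            + -44 * (HeunAux.shiftc 2 d n * X ^ n)
            + 12 * (HeunAux.shiftc 3 d n * X ^ n)
            + 12 * (lam + 5) * (HeunAux.shiftc 2 b n * X ^ n)
            + -(4 * (8 * lam + 43)) * (HeunAux.shiftc 1 b n * X ^ n)
            + 112 * (b n * X ^ n)
            + 3 * (lam - 1) * (lam + 9) * (HeunAux.shiftc 1 a n * X ^ n)
            + -((lam - 1) * (5 * lam + 51)) * (a n * X ^ n) := by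
        intro n
        simp only [HeunAux.heunCoef, hbdef, hddef]
        ring
      simp only [hfun]
      exact H
    rw [key] at hS
    exact hS.tsum_eq
  have hc0 : ∀ n, HeunAux.heunCoef lam a n = 0 :=
    HeunAux.eq_zero_of_vanishing hr (HeunAux.hyp_heunCoef lam ha) hδpos hvan
  constructor
  · have h0 := hc0 0
    rw [HeunAux.heunCoef_zero] at h0
    field_simp
    linear_combination h0
  · intro n
    have h2 : ((n : ℂ) + 2) ≠ 0 := by
      have : ((n + 2 : ℕ) : ℂ) ≠ 0 := Nat.cast_ne_zero.2 (by omega)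
      push_cast at this
      exact this
    have h9 : (2 * (n : ℂ) + 9) ≠ 0 := by
      have : ((2 * n + 9 : ℕ) : ℂ) ≠ 0 := Nat.cast_ne_zero.2 (by omega)
      push_cast at this
      exact this
    have h := hc0 (n + 1)
    rw [HeunAux.heunCoef_succ] at h
    rw [An, Bn]
    have hden : (16 * ((n : ℂ) + 2) * (2 * (n : ℂ) + 9)) ≠ 0 :=
      mul_ne_zero (mul_ne_zero (by norm_num) h2) h9
    rw [div_mul_eq_mul_div, div_mul_eq_mul_div, ← add_div, eq_div_iff hden]
    linear_combination h
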